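/- arXiv:1209.2744 — 6 statements merged into one kernel-verified Lean document; each statement's English description precedes it below -/
import Mathlib

section
/- Let C be a metric cycle of total length L (i.e., the circle ℝ/Lℤ with its intrinsic metric d_C), let β ∈ [0, 1/2], and let a, b ∈ C satisfy β·L ≤ d_C(a,b) ≤ (1/2 − β)·L. Then for any x, y ∈ C with d_C(x,a) ≤ β·L and d_C(y,a) ≤ β·L, we have |d_C(x,b) − d_C(y,b)| = d_C(x,y). -/
/-!
`cycDist L` is the metric of `AddCircle L` pulled back to `ℝ`. Choose real representatives
`r`, `u`, `v` of `a - b`, `x - a`, `y - a` of absolute value `d(a,b)`, `d(x,a)`, `d(y,a)`. The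
bounds make `|r + u|`, `|r + v|` and `|u - v|` at most `L/2`, so they are the distances
`d(x,b)`, `d(y,b)`, `d(x,y)`; and since `|u|, |v| ≤ |r|`, both `r + u` and `r + v` have the sign
of `r`.
-/

/-- The intrinsic metric on the cycle `ℝ/Lℤ` of total length `L`, in terms of
representatives in `ℝ`: `d_C(x,y) = min(m, L − m)` where `m = (x−y) mod L`. -/
noncomputable def cycDist (L x y : ℝ) : ℝ :=
  min ((x - y) - L * (⌊(x - y) / L⌋ : ℤ)) (L - ((x - y) - L * (⌊(x - y) / L⌋ : ℤ)))

theorem abs_abs_add_sub_abs_add {r u v : ℝ} (hu : |u| ≤ |r|) (hv : |v| ≤ |r|) :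
    |(|r + u| - |r + v|)| = |u - v| := by
  rw [abs_le] at hu hv
  rcases le_total 0 r with hr | hr
  · rw [abs_of_nonneg hr] at hu hv
    rw [abs_of_nonneg (by linarith : 0 ≤ r + u), abs_of_nonneg (by linarith : 0 ≤ r + v)]
    ring_nf
  · rw [abs_of_nonpos hr] at hu hv
    rw [abs_of_nonpos (by linarith : r + u ≤ 0), abs_of_nonpos (by linarith : r + v ≤ 0),
      ← abs_neg]
    ring_nf

namespace AddCircle

variable {p : ℝ}

theorem exists_coe_eq_and_abs_eq_norm (z : AddCircle p) :
    ∃ u : ℝ, (u : AddCircle p) = z ∧ |u| = ‖z‖ := by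
  induction z using QuotientAddGroup.induction_on with
  | H x =>
    refine ⟨x - round (p⁻¹ * x) * p, ?_, (norm_eq p).symm⟩
    rw [coe_sub, ← zsmul_eq_mul, coe_zsmul, coe_period, smul_zero, sub_zero]

theorem abs_dist_sub_dist_eq_dist (hp : 0 < p) {δ : ℝ} {a b x y : AddCircle p}
    (hab₁ : δ ≤ dist a b) (hab₂ : dist a b ≤ p / 2 - δ) (hx : dist x a ≤ δ)
    (hy : dist y a ≤ δ) : |dist x b - dist y b| = dist x y := by
  obtain ⟨r, hr, hr'⟩ := exists_coe_eq_and_abs_eq_norm (a - b)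
  obtain ⟨u, hu, hu'⟩ := exists_coe_eq_and_abs_eq_norm (x - a)
  obtain ⟨v, hv, hv'⟩ := exists_coe_eq_and_abs_eq_norm (y - a)
  rw [dist_eq_norm] at hab₁ hab₂ hx hy
  have norm_coe {t : ℝ} (ht : |t| ≤ p / 2) : ‖(t : AddCircle p)‖ = |t| :=
    (norm_coe_eq_abs_iff p hp.ne').2 (by rwa [abs_of_pos hp])
  have hxb : x - b = ((r + u : ℝ) : AddCircle p) := by rw [coe_add, hr, hu]; abel
  have hyb : y - b = ((r + v : ℝ) : AddCircle p) := by rw [coe_add, hr, hv]; abel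
  have hxy : x - y = ((u - v : ℝ) : AddCircle p) := by rw [coe_sub, hu, hv]; abel
  rw [dist_eq_norm, dist_eq_norm, dist_eq_norm, hxb, hyb, hxy,
    norm_coe ((abs_add_le r u).trans (by linarith)),
    norm_coe ((abs_add_le r v).trans (by linarith)),
    norm_coe ((abs_sub u v).trans (by linarith))]
  exact abs_abs_add_sub_abs_add (by linarith) (by linarith)

end AddCircle

theorem cycDist_eq_dist {L : ℝ} (hL : 0 < L) (x y : ℝ) :
    cycDist L x y = dist (x : AddCircle L) (y : AddCircle L) := by
  have hfract : x - y - L * ⌊(x - y) / L⌋ = L * Int.fract ((x - y) / L) := by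
    rw [Int.fract, mul_sub, mul_div_cancel₀ _ hL.ne']
  rw [dist_eq_norm, ← AddCircle.coe_sub, AddCircle.norm_eq' L hL, ← div_eq_inv_mul,
    abs_sub_round_eq_min, cycDist, hfract, ← mul_one_sub, mul_min_of_nonneg _ _ hL.le]

theorem flatten_isometric_near_general (L : ℝ) (hL : 0 < L) (β : ℝ)
    (a b x y : ℝ)
    (hab1 : β * L ≤ cycDist L a b) (hab2 : cycDist L a b ≤ (1 / 2 - β) * L)
    (hx : cycDist L x a ≤ β * L) (hy : cycDist L y a ≤ β * L) :
    |cycDist L x b - cycDist L y b| = cycDist L x y := by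
  simp only [cycDist_eq_dist hL] at hab1 hab2 hx hy ⊢
  exact AddCircle.abs_dist_sub_dist_eq_dist hL hab1 (by linarith) hx hy

/-- Flattening a cycle at a point `b` is an isometry on the ball of radius `β·L`
around a point `a` with `β·L ≤ d_C(a,b) ≤ (1/2 − β)·L`. -/
theorem flatten_isometric_near (L : ℝ) (hL : 0 < L) (β : ℝ)
    (hβ0 : 0 ≤ β) (hβ2 : β ≤ 1 / 2) (a b x y : ℝ)
    (hab1 : β * L ≤ cycDist L a b) (hab2 : cycDist L a b ≤ (1 / 2 - β) * L)
    (hx : cycDist L x a ≤ β * L) (hy : cycDist L y a ≤ β * L) :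
    |cycDist L x b - cycDist L y b| = cycDist L x y :=
  flatten_isometric_near_general L hL β a b x y hab1 hab2 hx hy
end

section
/- Let C be a metric cycle of total length L, let α ∈ [0, 1/4], and let p, q ∈ C with d_C(p,q) = α·L. Then for every pair of points x, y ∈ C: |d_C(x,p) − d_C(y,p)| + |d_C(x,q) − d_C(y,q)| ≥ 4α · d_C(x,y). -/
theorem min_abs_sub_abs_add_le_abs_abs_sub_abs (r s : ℝ) :
    min |r - s| |r + s| ≤ |(|r| - |s|)| := by
  rcases le_total 0 r with hr | hr <;> rcases le_total 0 s with hs | hs <;>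
    simp only [abs_of_nonneg, abs_of_nonpos, hr, hs]
  · exact min_le_left _ _
  · exact min_le_of_right_le (abs_eq_abs.2 (Or.inl (by ring))).ge
  · exact min_le_of_right_le (abs_eq_abs.2 (Or.inr (by ring))).ge
  · exact min_le_of_left_le (abs_eq_abs.2 (Or.inr (by ring))).ge

theorem mul_le_mul_min_of_le {a b c : ℝ} (ha : 0 ≤ a) (hb : 0 ≤ b) (hac : a ≤ c)
    (hbc : b ≤ c) :
    a * b ≤ c * min a b := by
  rw [mul_min_of_nonneg _ _ (ha.trans hac)]
  exact le_min (by nlinarith) (by nlinarith)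

namespace AddCircle

variable {T : ℝ}

theorem exists_coe_eq_abs_eq_norm (z : AddCircle T) :
    ∃ r : ℝ, (r : AddCircle T) = z ∧ |r| = ‖z‖ := by
  induction z using QuotientAddGroup.induction_on with
  | H x =>
    refine ⟨x - round (T⁻¹ * x) * T, ?_, (norm_eq T).symm⟩
    simp [coe_period]

theorem min_norm_sub_norm_add_le_abs_norm_sub_norm (u v : AddCircle T) :
    min ‖u - v‖ ‖u + v‖ ≤ |‖u‖ - ‖v‖| := by
  obtain ⟨r, rfl, hr⟩ := exists_coe_eq_abs_eq_norm u
  obtain ⟨s, rfl, hs⟩ := exists_coe_eq_abs_eq_norm v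
  rw [← hr, ← hs, ← coe_sub, ← coe_add]
  exact (min_le_min QuotientAddGroup.norm_mk_le_norm QuotientAddGroup.norm_mk_le_norm).trans
    (min_abs_sub_abs_add_le_abs_abs_sub_abs r s)

theorem norm_two_nsmul_of_norm_le (hT : T ≠ 0) {z : AddCircle T} (hz : ‖z‖ ≤ |T| / 4) :
    ‖2 • z‖ = 2 * ‖z‖ := by
  obtain ⟨r, rfl, hr⟩ := exists_coe_eq_abs_eq_norm z
  have h2r : |2 * r| = 2 * |r| := by rw [abs_mul, abs_two]
  rw [← coe_nsmul, nsmul_eq_mul, Nat.cast_ofNat, (norm_coe_eq_abs_iff T hT).2 (by linarith),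
    h2r, hr]

theorem norm_sub_mul_norm_two_nsmul_sub_le (hT : T ≠ 0) (x y p q : AddCircle T) :
    ‖x - y‖ * ‖2 • (p - q)‖ ≤ |T| / 2 * (|‖x - p‖ - ‖y - p‖| + |‖x - q‖ - ‖y - q‖|) := by
  have hp := min_norm_sub_norm_add_le_abs_norm_sub_norm (x - p) (y - p)
  have hq := min_norm_sub_norm_add_le_abs_norm_sub_norm (x - q) (y - q)
  rw [sub_sub_sub_cancel_right] at hp hq
  have hpq : ‖2 • (p - q)‖ ≤ ‖x - p + (y - p)‖ + ‖x - q + (y - q)‖ := by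
    rw [← norm_neg (x - p + (y - p))]
    refine le_of_eq_of_le ?_ (norm_add_le _ _)
    congr 1; abel
  have hxy := norm_le_half_period T hT (x := x - y)
  calc ‖x - y‖ * ‖2 • (p - q)‖
      ≤ ‖x - y‖ * ‖x - p + (y - p)‖ + ‖x - y‖ * ‖x - q + (y - q)‖ := by
        rw [← mul_add]; exact mul_le_mul_of_nonneg_left hpq (norm_nonneg _)
    _ ≤ |T| / 2 * min ‖x - y‖ ‖x - p + (y - p)‖
          + |T| / 2 * min ‖x - y‖ ‖x - q + (y - q)‖ :=
        add_le_add
          (mul_le_mul_min_of_le (norm_nonneg _) (norm_nonneg _) hxy (norm_le_half_period T hT))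
          (mul_le_mul_min_of_le (norm_nonneg _) (norm_nonneg _) hxy (norm_le_half_period T hT))
    _ ≤ _ := by rw [← mul_add]; gcongr

end AddCircle

theorem cycDist_eq_norm {L : ℝ} (hL : 0 < L) (x y : ℝ) :
    cycDist L x y = ‖((x - y : ℝ) : AddCircle L)‖ := by
  have hfract : (x - y) - L * (⌊(x - y) / L⌋ : ℤ) = L * Int.fract ((x - y) / L) := by
    rw [Int.fract]; field_simp
  rw [AddCircle.norm_eq' L hL, inv_mul_eq_div, abs_sub_round_eq_min,
    mul_min_of_nonneg _ _ hL.le, cycDist, hfract, mul_one_sub]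

theorem flatten_two_anchor_bound_general (L : ℝ) (hL : 0 < L) (α : ℝ)
    (hα4 : α ≤ 1 / 4) (p q x y : ℝ)
    (hpq : cycDist L p q = α * L) :
    4 * α * cycDist L x y ≤
      |cycDist L x p - cycDist L y p| + |cycDist L x q - cycDist L y q| := by
  simp only [cycDist_eq_norm hL, AddCircle.coe_sub] at hpq ⊢
  have hdouble : ‖2 • ((p : AddCircle L) - q)‖ = 2 * (α * L) := by
    rw [AddCircle.norm_two_nsmul_of_norm_le hL.ne' (by rw [hpq, abs_of_pos hL]; nlinarith), hpq]
  have key := AddCircle.norm_sub_mul_norm_two_nsmul_sub_le hL.ne' (x : AddCircle L) y p q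
  rw [hdouble, abs_of_pos hL] at key
  refine le_of_mul_le_mul_left ?_ (half_pos hL)
  calc L / 2 * (4 * α * ‖(x : AddCircle L) - y‖)
        = ‖(x : AddCircle L) - y‖ * (2 * (α * L)) := by ring
    _ ≤ _ := key

/-- Flattening lemma: if `p, q` are at cycle distance `α·L` with `α ∈ [0,1/4]`, then for
any `x, y` the sum of the two flattened distances is at least `4α·d_C(x,y)`. -/
theorem flatten_two_anchor_bound (L : ℝ) (hL : 0 < L) (α : ℝ)
    (hα0 : 0 ≤ α) (hα4 : α ≤ 1 / 4) (p q x y : ℝ)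
    (hpq : cycDist L p q = α * L) :
    4 * α * cycDist L x y ≤
      |cycDist L x p - cycDist L y p| + |cycDist L x q - cycDist L y q| :=
  flatten_two_anchor_bound_general L hL α hα4 p q x y hpq
end

section
/- Let G be an outerplanar graph (a graph with no K₄ minor and no K_{2,3} minor) whose outer face is a cycle C containing all vertices, and let d_C denote the path metric along the cycle C. Let p be a vertex of C and let (u,v) be an edge of the cycle with d_C(p,u) < d_C(p,v). Then at least one of the following holds: (a) every neighbor w of v in G satisfies d_C(p,w) ≥ d_C(p,u); (b) every neighbor w of u in G satisfies d_C(p,w) ≤ d_C(p,v). Equivalently: if there exist a neighbor v' of v with d_C(p,v') < d_C(p,u) and a neighbor u' of u with d_C(p,u') > d_C(p,v), then the union of the cycle C with the chords (u,u') and (v,v') contains a K₄ minor. -/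
/-- `G` has a complete graph `K_n` as a minor: there are `n` nonempty, pairwise
disjoint, connected branch sets with an edge of `G` between any two of them. -/
def HasCompleteMinor {V : Type*} (G : SimpleGraph V) (n : ℕ) : Prop :=
  ∃ A : Fin n → Set V,
    (∀ i, (A i).Nonempty) ∧
    (∀ i, (SimpleGraph.induce (A i) G).Connected) ∧
    (∀ i j, i ≠ j → Disjoint (A i) (A j)) ∧
    (∀ i j, i ≠ j → ∃ a ∈ A i, ∃ b ∈ A j, G.Adj a b)

/-- `G` has `K_{2,3}` as a minor. -/
def HasK23Minor {V : Type*} (G : SimpleGraph V) : Prop :=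
  ∃ (A : Fin 2 → Set V) (B : Fin 3 → Set V),
    (∀ i, (A i).Nonempty) ∧ (∀ j, (B j).Nonempty) ∧
    (∀ i, (SimpleGraph.induce (A i) G).Connected) ∧
    (∀ j, (SimpleGraph.induce (B j) G).Connected) ∧
    (∀ i j, i ≠ j → Disjoint (A i) (A j)) ∧
    (∀ i j, i ≠ j → Disjoint (B i) (B j)) ∧
    (∀ i j, Disjoint (A i) (B j)) ∧
    (∀ i j, ∃ a ∈ A i, ∃ b ∈ B j, G.Adj a b)

/-- The path metric (with unit edge lengths) along the cycle `0, 1, …, n−1, 0`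
on `Fin n`. -/
def cycGraphDist (n : ℕ) (i j : Fin n) : ℕ :=
  min ((j.val + n - i.val) % n) ((i.val + n - j.val) % n)

/-
If `v` had a neighbour `v'` strictly closer to `p` than `u`, and `u` a neighbour `u'` strictly
farther from `p` than `v`, then, reading the cycle from `p`, the chords `uu'` and `vv'` would cross
(the cyclic order is `v', u, v, u'` or `u, v, u', v'`). Two crossing chords of a Hamilton cycle
yield a `K₄` minor: the four arcs between consecutive chord endpoints are the branch sets, joined
to their neighbours along the cycle and to their opposite arc by a chord.
-/

open Fin.CommRing

theorem cycGraphDist_eq_min {n : ℕ} [NeZero n] (p x : Fin n) :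
    cycGraphDist n p x = min (x - p).val (n - (x - p).val) := by
  have hx := x.isLt
  have hp := p.isLt
  rcases lt_trichotomy x p with h | rfl | h
  · rw [cycGraphDist, Fin.coe_sub_iff_lt.2 h, Nat.mod_eq_of_lt (by omega : x.val + n - p < n),
      show p.val + n - x.val = p.val - x.val + n by omega, Nat.add_mod_right,
      Nat.mod_eq_of_lt (by omega : p.val - x.val < n)]
    omega
  · simp [cycGraphDist]
  · rw [cycGraphDist, Fin.sub_val_of_le h.le, Nat.mod_eq_of_lt (by omega : p.val + n - x < n),
      show x.val + n - p.val = x.val - p.val + n by omega, Nat.add_mod_right,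
      Nat.mod_eq_of_lt (by omega : x.val - p.val < n)]
    omega

theorem hasCompleteMinor_of_lt {V : Type*} {G : SimpleGraph V} {m : ℕ} (A : Fin m → Set V)
    (hne : ∀ i, (A i).Nonempty) (hconn : ∀ i, (G.induce (A i)).Connected)
    (hdisj : ∀ i j, i < j → Disjoint (A i) (A j))
    (hadj : ∀ i j, i < j → ∃ a ∈ A i, ∃ b ∈ A j, G.Adj a b) : HasCompleteMinor G m := by
  refine ⟨A, hne, hconn, fun i j hij => ?_, fun i j hij => ?_⟩
  · rcases hij.lt_or_gt with h | h
    · exact hdisj i j h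
    · exact (hdisj j i h).symm
  · rcases hij.lt_or_gt with h | h
    · exact hadj i j h
    · obtain ⟨a, ha, b, hb, hab⟩ := hadj j i h
      exact ⟨b, hb, a, ha, hab.symm⟩

section CycleArcs

variable {n : ℕ} {G : SimpleGraph (Fin n)}

def cycArc (b : Fin n) (l r : ℕ) : Set (Fin n) :=
  {x | l ≤ (x - b).val ∧ (x - b).val ≤ r}

theorem disjoint_cycArc (b : Fin n) {l₁ r₁ l₂ r₂ : ℕ} (h : r₁ < l₂) :
    Disjoint (cycArc b l₁ r₁) (cycArc b l₂ r₂) :=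
  Set.disjoint_left.2 fun _ h₁ h₂ => by
    have := h₁.2
    have := h₂.1
    omega

variable [NeZero n]

theorem add_natCast_mem_cycArc (b : Fin n) {l m r : ℕ} (hlm : l ≤ m) (hmr : m ≤ r)
    (hm : m < n) : b + (m : Fin n) ∈ cycArc b l r := by
  rw [cycArc, Set.mem_ofPred_eq, add_sub_cancel_left, Fin.val_natCast, Nat.mod_eq_of_lt hm]
  exact ⟨hlm, hmr⟩

variable (hcyc : ∀ i : Fin n, G.Adj i (i + 1))
include hcyc

theorem adj_add_natCast_succ (b : Fin n) (m : ℕ) : G.Adj (b + m) (b + (m + 1 : ℕ)) := by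
  simpa [add_assoc] using hcyc (b + m)

theorem cycArc_connected (b : Fin n) {l r : ℕ} (hlr : l ≤ r) (hr : r < n) :
    (G.induce (cycArc b l r)).Connected := by
  have mem : ∀ m, l ≤ m → m ≤ r → b + (m : Fin n) ∈ cycArc b l r :=
    fun m hlm hmr => add_natCast_mem_cycArc b hlm hmr (by omega)
  have reach : ∀ m (hlm : l ≤ m) (hmr : m ≤ r),
      (G.induce (cycArc b l r)).Reachable ⟨_, mem l le_rfl hlr⟩ ⟨_, mem m hlm hmr⟩ := by
    intro m hlm
    induction m, hlm using Nat.le_induction with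
    | base => exact fun _ => .rfl
    | succ m hlm ih =>
      exact fun hmr => (ih (by omega)).trans <| SimpleGraph.Adj.reachable <| by
        exact adj_add_natCast_succ hcyc b m
  refine (SimpleGraph.connected_iff_exists_forall_reachable _).2 ⟨⟨_, mem l le_rfl hlr⟩, ?_⟩
  rintro ⟨x, hx⟩
  obtain ⟨m, hm, rfl⟩ : ∃ m < n, x = b + (m : Fin n) := ⟨(x - b).val, (x - b).isLt, by simp⟩
  rw [cycArc, Set.mem_ofPred_eq, add_sub_cancel_left, Fin.val_natCast, Nat.mod_eq_of_lt hm] at hx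
  exact reach m hx.1 hx.2

theorem exists_adj_cycArc (b : Fin n) {l m r : ℕ} (hlm : l < m) (hmr : m ≤ r) (hr : r < n) :
    ∃ a ∈ cycArc b l (m - 1), ∃ c ∈ cycArc b m r, G.Adj a c := by
  obtain ⟨k, rfl⟩ : ∃ k, m = k + 1 := ⟨m - 1, by omega⟩
  exact ⟨_, add_natCast_mem_cycArc b (by omega) (by omega) (by omega),
    _, add_natCast_mem_cycArc b le_rfl hmr (by omega), adj_add_natCast_succ hcyc b k⟩

theorem hasCompleteMinor_four_of_crossing_chords_from {w x y z : Fin n}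
    (hwx : 0 < (x - w).val) (hxy : (x - w).val < (y - w).val) (hyz : (y - w).val < (z - w).val)
    (hwy : G.Adj w y) (hxz : G.Adj x z) : HasCompleteMinor G 4 := by
  have hzn := (z - w).isLt
  have hw : ∀ r, w ∈ cycArc w 0 r := fun r => by simp [cycArc]
  have hlast : w + ((n - 1 : ℕ) : Fin n) ∈ cycArc w (z - w).val (n - 1) :=
    add_natCast_mem_cycArc w (by omega) le_rfl (by omega)
  have hwrap : G.Adj w (w + ((n - 1 : ℕ) : Fin n)) := by
    simpa [Nat.sub_add_cancel NeZero.one_le] using (adj_add_natCast_succ hcyc w (n - 1)).symm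
  refine hasCompleteMinor_of_lt
    ![cycArc w 0 ((x - w).val - 1), cycArc w (x - w).val ((y - w).val - 1),
      cycArc w (y - w).val ((z - w).val - 1), cycArc w (z - w).val (n - 1)] ?_ ?_ ?_ ?_
  · intro i
    fin_cases i
    · exact ⟨w, hw _⟩
    · exact ⟨x, le_rfl, by omega⟩
    · exact ⟨y, le_rfl, by omega⟩
    · exact ⟨z, le_rfl, by omega⟩
  · intro i
    fin_cases i <;> exact cycArc_connected hcyc w (by omega) (by omega)
  · intro i j h
    fin_cases i <;> fin_cases j <;> first | exact disjoint_cycArc w (by omega) | simp at h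
  · intro i j h
    fin_cases i <;> fin_cases j <;> try simp at h
    · exact exists_adj_cycArc hcyc w hwx (by omega) (by omega)
    · exact ⟨w, hw _, y, ⟨le_rfl, by omega⟩, hwy⟩
    · exact ⟨w, hw _, _, hlast, hwrap⟩
    · exact exists_adj_cycArc hcyc w hxy (by omega) (by omega)
    · exact ⟨x, ⟨le_rfl, by omega⟩, z, ⟨le_rfl, by omega⟩, hxz⟩
    · exact exists_adj_cycArc hcyc w hyz (by omega) (by omega)

theorem hasCompleteMinor_four_of_crossing_chords (b : Fin n) {w x y z : Fin n}
    (hwx : (w - b).val < (x - b).val) (hxy : (x - b).val < (y - b).val)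
    (hyz : (y - b).val < (z - b).val) (hwy : G.Adj w y) (hxz : G.Adj x z) :
    HasCompleteMinor G 4 := by
  have rebase : ∀ a : Fin n, (w - b).val ≤ (a - b).val →
      (a - w).val = (a - b).val - (w - b).val := fun a ha => by
    rw [← sub_sub_sub_cancel_right a w b, Fin.sub_val_of_le ha]
  have hx := rebase x hwx.le
  have hy := rebase y (by omega)
  have hz := rebase z (by omega)
  exact hasCompleteMinor_four_of_crossing_chords_from hcyc (by omega) (by omega) (by omega) hwy hxz

end CycleArcs

theorem outerplanar_good_endpoint_general {n : ℕ} [NeZero n] (G : SimpleGraph (Fin n))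
    (hcyc : ∀ i : Fin n, G.Adj i (i + 1))
    (hK4 : ¬ HasCompleteMinor G 4)
    (p u v : Fin n) (huv : v = u + 1)
    (hpuv : cycGraphDist n p u < cycGraphDist n p v) :
    (∀ w : Fin n, G.Adj v w → cycGraphDist n p u ≤ cycGraphDist n p w) ∨
    (∀ w : Fin n, G.Adj u w → cycGraphDist n p w ≤ cycGraphDist n p v) := by
  by_contra! h
  obtain ⟨⟨v', hvv', hv'⟩, u', huu', hu'⟩ := h
  simp only [cycGraphDist_eq_min] at hpuv hv' hu'
  have hu_lt := (u - p).isLt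
  have hv_lt := (v - p).isLt
  have hu'_lt := (u' - p).isLt
  have hv : (v - p).val = ((u - p).val + 1) % n := by
    rw [huv, add_sub_right_comm, Fin.val_add, Fin.val_one', Nat.mod_eq_of_lt (by omega : 1 < n)]
  have hun : (u - p).val + 1 < n := by
    by_contra
    rw [show (u - p).val + 1 = n by omega, Nat.mod_self] at hv
    omega
  rw [Nat.mod_eq_of_lt hun] at hv
  obtain hbefore | hafter : (v' - p).val < (u - p).val ∨ n - (u - p).val < (v' - p).val := by
    omega
  · exact hK4 (hasCompleteMinor_four_of_crossing_chords hcyc p (by omega) (by omega) (by omega)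
      hvv'.symm huu')
  · exact hK4 (hasCompleteMinor_four_of_crossing_chords hcyc p (by omega) (by omega) (by omega)
      huu' hvv')

/-- Lemma 3.8: Let `G` be an outerplanar graph (no `K₄` and no `K_{2,3}` minor) on
vertex set `Fin n`, containing the Hamilton cycle `i ∼ i+1` as its outer face, with
`d_C` the path metric along the cycle. If `(u,v)` is a cycle edge and `p` a vertex
with `d_C(p,u) < d_C(p,v)`, then either every neighbor `w` of `v` has
`d_C(p,w) ≥ d_C(p,u)`, or every neighbor `w` of `u` has `d_C(p,w) ≤ d_C(p,v)`. -/
theorem outerplanar_good_endpoint {n : ℕ} (hn : 3 ≤ n) [NeZero n] (G : SimpleGraph (Fin n))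
    (hcyc : ∀ i : Fin n, G.Adj i (i + 1))
    (hK4 : ¬ HasCompleteMinor G 4) (hK23 : ¬ HasK23Minor G)
    (p u v : Fin n) (huv : v = u + 1)
    (hpuv : cycGraphDist n p u < cycGraphDist n p v) :
    (∀ w : Fin n, G.Adj v w → cycGraphDist n p u ≤ cycGraphDist n p w) ∨
    (∀ w : Fin n, G.Adj u w → cycGraphDist n p w ≤ cycGraphDist n p v) :=
  outerplanar_good_endpoint_general G hcyc hK4 p u v huv hpuv
end

section
/- Let G = (V,E) be an undirected graph with polymatroid capacities ρ_v : Set(E(v)) → [0,∞), where each ρ_v is monotone and submodular, and demands dem : V × V → [0,∞). For any subset S ⊆ E of edges, define ν(S) = min over valid assignments g : S → V (mapping each edge to one of its endpoints) of Σ_v ρ_v(g⁻¹(v)), and let σ_S(x,y) = 1 if x and y lie in different connected components of (V, E \ S), else 0. Then the maximum concurrent flow value mcf_G(ρ, dem) is at most ν(S) / Σ_{u,v} dem(u,v)·σ_S(u,v) whenever the denominator is positive. -/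
/-!
Every path of a commodity whose endpoints are separated by `S` uses an edge of `S`, so the
separated demand `ε · D` is at most the total flow `Σ_{e ∈ S} φ(e)` through `S`. Splitting `S`
into the fibres `g⁻¹(v)`, each consisting of edges incident to `v`, feasibility bounds the flow
through `g⁻¹(v)` by `ρ_v(g⁻¹(v))`.
-/

namespace SimpleGraph

variable {V M : Type*} {G : SimpleGraph V} [Fintype V] [DecidableEq V] [DecidableRel G.Adj]
  [AddCommMonoid M] [PartialOrder M] [IsOrderedAddMonoid M]

theorem sum_path_le_sum_mem_edges_of_not_reachable_deleteEdges {s : Finset (Sym2 V)} {u v : V}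
    (f : G.Path u v → M) (hf : ∀ p, 0 ≤ f p) (h : ¬ (G.deleteEdges ↑s).Reachable u v) :
    ∑ p, f p ≤ ∑ e ∈ s, ∑ p : G.Path u v, if e ∈ (p : G.Walk u v).edges then f p else 0 := by
  rw [Finset.sum_comm]
  refine Finset.sum_le_sum fun p _ => ?_
  obtain ⟨e, hes, hep⟩ := (p : G.Walk u v).exists_mem_edges_of_not_reachable_deleteEdges h
  calc f p = if e ∈ (p : G.Walk u v).edges then f p else 0 := (if_pos hep).symm
    _ ≤ _ := Finset.single_le_sum (f := fun e => if e ∈ (p : G.Walk u v).edges then f p else 0)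
      (fun _ _ => ite_nonneg (hf p) le_rfl) hes

open Classical in
theorem sum_separated_le_sum_mem_edges (f : ∀ u v : V, G.Path u v → M)
    (hf : ∀ u v p, 0 ≤ f u v p) (s : Finset (Sym2 V)) :
    ∑ u, ∑ v, (if (G.deleteEdges ↑s).Reachable u v then 0 else ∑ p, f u v p) ≤
      ∑ e ∈ s, ∑ u, ∑ v, ∑ p : G.Path u v,
        if e ∈ (p : G.Walk u v).edges then f u v p else 0 := by
  conv_rhs => rw [Finset.sum_comm]; enter [2, u]; rw [Finset.sum_comm]
  refine Finset.sum_le_sum fun u _ => Finset.sum_le_sum fun v _ => ?_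
  split_ifs with hreach
  · exact Finset.sum_nonneg fun e _ => Finset.sum_nonneg fun p _ => ite_nonneg (hf u v p) le_rfl
  · exact sum_path_le_sum_mem_edges_of_not_reachable_deleteEdges _ (hf u v) hreach

end SimpleGraph

open Classical in
theorem mcf_le_sparsity_general {V : Type*} [Fintype V] [DecidableEq V]
    (G : SimpleGraph V) [DecidableRel G.Adj]
    (ρ : V → Finset (Sym2 V) → ℝ)
    (dem : V → V → ℝ)
    (ε : ℝ)
    -- the flow: a nonnegative amount on each simple path, for each commodity
    (f : ∀ u v : V, G.Path u v → ℝ) (hf : ∀ u v p, 0 ≤ f u v p)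
    -- it routes an `ε` fraction of every demand
    (hroute : ∀ u v : V, ∑ p : G.Path u v, f u v p = ε * dem u v)
    -- the total flow through each edge
    (φ : Sym2 V → ℝ)
    (hφ : ∀ e : Sym2 V, φ e =
      ∑ u : V, ∑ v : V, ∑ p : G.Path u v,
        if e ∈ (p : G.Walk u v).edges then f u v p else 0)
    -- feasibility with respect to the polymatroid capacities
    (hfeas : ∀ (v : V) (T : Finset (Sym2 V)),
      (∀ e ∈ T, e ∈ G.edgeFinset ∧ v ∈ e) → ∑ e ∈ T, φ e ≤ ρ v T)
    -- an edge cut `S`, a valid assignment `g`, and the separated demand `D`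
    (S : Finset (Sym2 V)) (hS : S ⊆ G.edgeFinset)
    (g : Sym2 V → V) (hg : ∀ e ∈ S, g e ∈ e)
    (D : ℝ)
    (hD : D = ∑ u : V, ∑ v : V,
      dem u v * (if (G.deleteEdges ↑S).Reachable u v then 0 else 1))
    (hDpos : 0 < D) :
    ε ≤ (∑ v : V, ρ v (S.filter (fun e => g e = v))) / D := by
  rw [le_div_iff₀ hDpos]
  have hsep : ε * D = ∑ u, ∑ v,
      (if (G.deleteEdges ↑S).Reachable u v then 0 else ∑ p : G.Path u v, f u v p) := by
    simp only [hD, Finset.mul_sum, hroute]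
    refine Finset.sum_congr rfl fun u _ => Finset.sum_congr rfl fun v _ => ?_
    split_ifs <;> ring
  have hcut : ε * D ≤ ∑ e ∈ S, φ e := by
    simpa only [hsep, hφ] using G.sum_separated_le_sum_mem_edges f hf S
  have hcap : ∑ e ∈ S, φ e ≤ ∑ v, ρ v (S.filter (fun e => g e = v)) := by
    rw [← Finset.sum_fiberwise S g φ]
    refine Finset.sum_le_sum fun v _ => hfeas v _ fun e he => ?_
    rw [Finset.mem_filter] at he
    exact ⟨hS he.1, he.2 ▸ hg e he.1⟩
  exact hcut.trans hcap

open Classical in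
/-- Cut upper bound for maximum concurrent flow in polymatroid networks: if a
multicommodity flow `f` routes `ε·dem(u,v)` between every pair `(u,v)` feasibly with
respect to the polymatroid capacities `ρ_v`, then for every edge set `S` with positive
separated demand `D`, and every valid assignment `g` of the edges of `S` to their
endpoints, `ε ≤ (Σ_v ρ_v(g⁻¹(v))) / D`. -/
theorem mcf_le_sparsity {V : Type*} [Fintype V] [DecidableEq V]
    (G : SimpleGraph V) [DecidableRel G.Adj]
    (ρ : V → Finset (Sym2 V) → ℝ)
    (hρ0 : ∀ v, ρ v ∅ = 0)
    (hρmono : ∀ v (A B : Finset (Sym2 V)), A ⊆ B → ρ v A ≤ ρ v B)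
    (hρsub : ∀ v (A B : Finset (Sym2 V)), ρ v (A ∪ B) + ρ v (A ∩ B) ≤ ρ v A + ρ v B)
    (dem : V → V → ℝ) (hdem : ∀ u v, 0 ≤ dem u v)
    (ε : ℝ) (hε : 0 ≤ ε)
    -- the flow: a nonnegative amount on each simple path, for each commodity
    (f : ∀ u v : V, G.Path u v → ℝ) (hf : ∀ u v p, 0 ≤ f u v p)
    -- it routes an `ε` fraction of every demand
    (hroute : ∀ u v : V, ∑ p : G.Path u v, f u v p = ε * dem u v)
    -- the total flow through each edge
    (φ : Sym2 V → ℝ)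
    (hφ : ∀ e : Sym2 V, φ e =
      ∑ u : V, ∑ v : V, ∑ p : G.Path u v,
        if e ∈ (p : G.Walk u v).edges then f u v p else 0)
    -- feasibility with respect to the polymatroid capacities
    (hfeas : ∀ (v : V) (T : Finset (Sym2 V)),
      (∀ e ∈ T, e ∈ G.edgeFinset ∧ v ∈ e) → ∑ e ∈ T, φ e ≤ ρ v T)
    -- an edge cut `S`, a valid assignment `g`, and the separated demand `D`
    (S : Finset (Sym2 V)) (hS : S ⊆ G.edgeFinset)
    (g : Sym2 V → V) (hg : ∀ e ∈ S, g e ∈ e)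
    (D : ℝ)
    (hD : D = ∑ u : V, ∑ v : V,
      dem u v * (if (G.deleteEdges ↑S).Reachable u v then 0 else 1))
    (hDpos : 0 < D) :
    ε ≤ (∑ v : V, ρ v (S.filter (fun e => g e = v))) / D :=
  mcf_le_sparsity_general G ρ dem ε f hf hroute φ hφ hfeas S hS g hg D hD hDpos
end

section
/- Let C be a metric cycle of length L obtained from a path P of length ℓ_P by adding an edge of length δ·ℓ_P between its endpoints u, v (so L = (1+δ)ℓ_P). Suppose δ ≤ 1/160. Then there exist points p, q ∈ C with d_C(p,q) = L/6 such that for a ∈ {u,v} and b ∈ {p,q}: L/16 ≤ d_C(a,b) ≤ (1/2 − 1/16)·L; moreover d_C(b,u) ≤ d_C(b,v) for b ∈ {p,q}; and for every point x on P with d_P(x,u) ≤ (1/2 + 1/160)·ℓ_P, one has d_C(b,x) ≤ d_C(b,u). -/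
lemma cycDist_of_nonneg {L x y : ℝ} (hL : 0 < L) (h0 : 0 ≤ x - y) (h1 : x - y < L) :
    cycDist L x y = min (x - y) (L - (x - y)) := by
  have hfl : ⌊(x - y) / L⌋ = 0 := by
    rw [Int.floor_eq_zero_iff]
    constructor
    · positivity
    · rw [div_lt_one hL]; exact h1
  simp [cycDist, hfl]

lemma cycDist_of_neg {L x y : ℝ} (hL : 0 < L) (h0 : -L ≤ x - y) (h1 : x - y < 0) :
    cycDist L x y = min (x - y + L) (-(x - y)) := by
  have hfl : ⌊(x - y) / L⌋ = -1 := by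
    rw [Int.floor_eq_iff]
    push_cast
    constructor
    · rw [neg_le, ← neg_div, div_le_one hL]
      linarith
    · norm_num
      exact div_neg_of_neg_of_pos h1 hL
  rw [cycDist, hfl]
  push_cast
  ring_nf

lemma inner_prop (ℓP δ b : ℝ) (hℓP : 0 < ℓP) (hδ0 : 0 ≤ δ) (hδ : δ ≤ 1 / 160)
    (hb1 : (81/320) * ℓP ≤ b) (hb2 : b ≤ (101/240) * ℓP) :
    (∀ a ∈ ({0, ℓP} : Set ℝ),
      (1 + δ) * ℓP / 16 ≤ cycDist ((1 + δ) * ℓP) a b ∧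
      cycDist ((1 + δ) * ℓP) a b ≤ (1 / 2 - 1 / 16) * ((1 + δ) * ℓP)) ∧
    cycDist ((1 + δ) * ℓP) b 0 ≤ cycDist ((1 + δ) * ℓP) b ℓP ∧
    ∀ s : ℝ, 0 ≤ s → s ≤ (1 / 2 + 1 / 160) * ℓP →
      cycDist ((1 + δ) * ℓP) b s ≤ cycDist ((1 + δ) * ℓP) b 0 := by
  set L := (1 + δ) * ℓP with hLdef
  have hL : 0 < L := by positivity
  have hbpos : 0 < b := by nlinarith
  have hbL : b < L := by nlinarith
  have hb0 : cycDist L b 0 = b := by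
    rw [cycDist_of_nonneg hL (by linarith) (by linarith)]
    rw [min_eq_left (by nlinarith)]
    ring
  refine ⟨?_, ?_, ?_⟩
  · rintro a (rfl | h)
    · -- a = 0
      have h : cycDist L 0 b = min (0 - b + L) (-(0 - b)) :=
        cycDist_of_neg hL (by linarith) (by linarith)
      rw [h]
      constructor
      · rw [le_min_iff]; constructor <;> nlinarith
      · calc min (0 - b + L) (-(0 - b)) ≤ -(0 - b) := min_le_right _ _
          _ ≤ (1/2 - 1/16) * L := by nlinarith
    · -- a = ℓP
      rw [h]
      have h : cycDist L ℓP b = min (ℓP - b) (L - (ℓP - b)) :=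
        cycDist_of_nonneg hL (by nlinarith) (by nlinarith)
      rw [h]
      constructor
      · rw [le_min_iff]; constructor <;> nlinarith
      · calc min (ℓP - b) (L - (ℓP - b)) ≤ L - (ℓP - b) := min_le_right _ _
          _ ≤ (1/2 - 1/16) * L := by nlinarith
  · rw [hb0, cycDist_of_neg hL (by nlinarith) (by nlinarith), le_min_iff]
    constructor <;> nlinarith
  · intro s hs0 hs1
    rw [hb0]
    rcases le_or_gt s b with h | h
    · rw [cycDist_of_nonneg hL (by linarith) (by nlinarith)]
      calc min (b - s) (L - (b - s)) ≤ b - s := min_le_left _ _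
        _ ≤ b := by linarith
    · rw [cycDist_of_neg hL (by nlinarith) (by linarith)]
      calc min (b - s + L) (-(b - s)) ≤ -(b - s) := min_le_right _ _
        _ ≤ b := by nlinarith

/-- Existence of suitable anchor points (conditions (a) and (b) of Corollary 3.7):
on the cycle `C` of length `L = (1+δ)·ℓP` formed from a path `P` of length `ℓP`
(parametrized as the arc `[0, ℓP]`, with `u = 0` and `v = ℓP` joined by an edge of
length `δ·ℓP`), with `δ ≤ 1/160`, there exist points `p, q` at cycle distance `L/6`
such that each `b ∈ {p,q}` satisfies `L/16 ≤ d_C(a,b) ≤ (1/2 − 1/16)·L` for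
`a ∈ {u,v}`, is at least as close to `u` as to `v`, and satisfies
`d_C(b,x) ≤ d_C(b,u)` for every `x` on `P` with `d_P(x,u) ≤ (1/2 + 1/160)·ℓP`. -/
theorem anchor_points_exist (ℓP δ : ℝ) (hℓP : 0 < ℓP) (hδ0 : 0 ≤ δ)
    (hδ : δ ≤ 1 / 160) :
    ∃ p q : ℝ,
      cycDist ((1 + δ) * ℓP) p q = (1 + δ) * ℓP / 6 ∧
      ∀ b ∈ ({p, q} : Set ℝ),
        (∀ a ∈ ({0, ℓP} : Set ℝ),
          (1 + δ) * ℓP / 16 ≤ cycDist ((1 + δ) * ℓP) a b ∧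
          cycDist ((1 + δ) * ℓP) a b ≤ (1 / 2 - 1 / 16) * ((1 + δ) * ℓP)) ∧
        cycDist ((1 + δ) * ℓP) b 0 ≤ cycDist ((1 + δ) * ℓP) b ℓP ∧
        ∀ s : ℝ, 0 ≤ s → s ≤ (1 / 2 + 1 / 160) * ℓP →
          cycDist ((1 + δ) * ℓP) b s ≤ cycDist ((1 + δ) * ℓP) b 0 := by
  set L := (1 + δ) * ℓP with hLdef
  have hL : 0 < L := by positivity
  refine ⟨(81/320) * ℓP, (81/320) * ℓP + L / 6, ?_, ?_⟩
  · rw [cycDist_of_neg hL (by nlinarith) (by nlinarith)]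
    rw [min_eq_right (by nlinarith)]
    ring
  · rintro b (rfl | rfl)
    · exact inner_prop ℓP δ _ hℓP hδ0 hδ le_rfl (by nlinarith)
    · exact inner_prop ℓP δ _ hℓP hδ0 hδ (by nlinarith) (by nlinarith)
end

section
/- Suppose a tree metric embedding satisfies: for x on a path P glued into a tree via a cycle C of length L with anchors p, q that are (1/6)·L apart, and the image of x is the flattening at p with probability 1/2 and at q with probability 1/2. Then for any x, y ∈ C, E[flattened distance] = (1/2)|d_C(x,p) − d_C(y,p)| + (1/2)|d_C(x,q) − d_C(y,q)| ≥ (1/3)·d_C(x,y). -/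
namespace AddCircle

variable {L : ℝ}

theorem norm_coe_eq_abs_of_abs_le_half (hL : 0 < L) {s : ℝ} (hs : |s| ≤ L / 2) :
    ‖(s : AddCircle L)‖ = |s| :=
  (norm_coe_eq_abs_iff L hL.ne').2 (by rwa [abs_of_pos hL])

theorem norm_coe_eq_min_of_abs_le (hL : 0 < L) {s : ℝ} (hs : |s| ≤ L) :
    ‖(s : AddCircle L)‖ = min |s| (L - |s|) := by
  rcases le_or_gt |s| (L / 2) with h | h
  · rw [norm_coe_eq_abs_of_abs_le_half hL h, min_eq_left (by linarith)]
  rw [min_eq_right (by linarith)]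
  rw [abs_le] at hs
  rcases abs_cases s with ⟨hs', hpos⟩ | ⟨hs', hneg⟩
  · rw [show (s : AddCircle L) = ((s - L : ℝ) : AddCircle L) by rw [coe_sub, coe_period, sub_zero],
      norm_coe_eq_abs_of_abs_le_half hL] <;> rw [abs_of_nonpos] <;> linarith
  · rw [← coe_add_period, norm_coe_eq_abs_of_abs_le_half hL] <;> rw [abs_of_nonneg] <;> linarith

theorem norm_coe_neg (s : ℝ) : ‖((-s : ℝ) : AddCircle L)‖ = ‖(s : AddCircle L)‖ := by
  rw [coe_neg, norm_neg]

theorem norm_coe_cases (hL : 0 < L) {c t : ℝ} (hc0 : 0 ≤ c) (hc : c ≤ L / 2) (ht : |t| ≤ L / 2) :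
    (t ≤ c - L / 2 ∧ ‖(t : AddCircle L)‖ = -t ∧ ‖((t - c : ℝ) : AddCircle L)‖ = L + t - c) ∨
    (c - L / 2 ≤ t ∧ t ≤ 0 ∧ ‖(t : AddCircle L)‖ = -t ∧ ‖((t - c : ℝ) : AddCircle L)‖ = c - t) ∨
    (0 ≤ t ∧ t ≤ c ∧ ‖(t : AddCircle L)‖ = t ∧ ‖((t - c : ℝ) : AddCircle L)‖ = c - t) ∨
    (c ≤ t ∧ ‖(t : AddCircle L)‖ = t ∧ ‖((t - c : ℝ) : AddCircle L)‖ = t - c) := by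
  rw [norm_coe_eq_abs_of_abs_le_half hL ht]
  rw [abs_le] at ht
  rw [norm_coe_eq_min_of_abs_le hL (abs_le.2 ⟨by linarith, by linarith⟩)]
  rcases le_or_gt t (c - L / 2) with h1 | h1
  · refine Or.inl ⟨h1, abs_of_nonpos (by linarith), ?_⟩
    rw [abs_of_nonpos (by linarith), min_eq_right (by linarith)]
    ring
  rcases le_or_gt t 0 with h2 | h2
  · refine Or.inr (Or.inl ⟨h1.le, h2, abs_of_nonpos h2, ?_⟩)
    rw [abs_of_nonpos (by linarith), min_eq_left (by linarith)]
    ring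
  rcases le_or_gt t c with h3 | h3
  · refine Or.inr (Or.inr (Or.inl ⟨h2.le, h3, abs_of_pos h2, ?_⟩))
    rw [abs_of_nonpos (by linarith), min_eq_left (by linarith)]
    ring
  · refine Or.inr (Or.inr (Or.inr ⟨h3.le, abs_of_pos h2, ?_⟩))
    rw [abs_of_pos (by linarith), min_eq_left (by linarith)]

theorem four_mul_norm_coe_sub_le (hL : 0 < L) {α a b : ℝ} (hα0 : 0 ≤ α) (hα : α ≤ 1 / 4)
    (ha : |a| ≤ L / 2) (hb : |b| ≤ L / 2) :
    4 * α * ‖((a - b : ℝ) : AddCircle L)‖ ≤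
      |‖(a : AddCircle L)‖ - ‖(b : AddCircle L)‖| +
        |‖((a - α * L : ℝ) : AddCircle L)‖ - ‖((b - α * L : ℝ) : AddCircle L)‖| := by
  have hab : |a - b| ≤ L := (abs_sub _ _).trans (by linarith)
  rw [norm_coe_eq_min_of_abs_le hL hab]
  have hm0 : 0 ≤ min |a - b| (L - |a - b|) := le_min (abs_nonneg _) (by linarith)
  have hm1 := min_le_left |a - b| (L - |a - b|)
  have hm2 := min_le_right |a - b| (L - |a - b|)
  have hαL : α * L ≤ L / 2 := by nlinarith
  -- On each pair of arcs given by `norm_coe_cases`, the claim follows linearly from the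
  -- nonnegativity of these three products.
  have hprod₁ := mul_nonneg (sub_nonneg.2 hα) hm0
  have hprod₂ := mul_nonneg hα0 (by linarith : 0 ≤ L / 2 - min |a - b| (L - |a - b|))
  have hprod₃ := mul_nonneg (sub_nonneg.2 hα) hL.le
  have hX1 := le_abs_self (‖(a : AddCircle L)‖ - ‖(b : AddCircle L)‖)
  have hX2 := neg_abs_le (‖(a : AddCircle L)‖ - ‖(b : AddCircle L)‖)
  have hY1 := le_abs_self (‖((a - α * L : ℝ) : AddCircle L)‖ - ‖((b - α * L : ℝ) : AddCircle L)‖)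
  have hY2 := neg_abs_le (‖((a - α * L : ℝ) : AddCircle L)‖ - ‖((b - α * L : ℝ) : AddCircle L)‖)
  rcases norm_coe_cases hL (mul_nonneg hα0 hL.le) hαL ha with
    ⟨_, _, _⟩ | ⟨_, _, _, _⟩ | ⟨_, _, _, _⟩ | ⟨_, _, _⟩ <;>
  rcases norm_coe_cases hL (mul_nonneg hα0 hL.le) hαL hb with
    ⟨_, _, _⟩ | ⟨_, _, _, _⟩ | ⟨_, _, _, _⟩ | ⟨_, _, _⟩ <;>
  rcases abs_cases (a - b) with ⟨_, _⟩ | ⟨_, _⟩ <;>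
  linarith

theorem exists_abs_le_half_coe_eq (hL : 0 < L) (u : AddCircle L) :
    ∃ a : ℝ, |a| ≤ L / 2 ∧ (a : AddCircle L) = u := by
  obtain ⟨x, rfl⟩ := QuotientAddGroup.mk_surjective u
  refine ⟨x - round (L⁻¹ * x) * L, ?_, ?_⟩
  · have := norm_le_half_period L hL.ne' (x := x)
    rwa [norm_eq, abs_of_pos hL] at this
  · rw [coe_sub, ← zsmul_eq_mul, coe_zsmul, coe_period, smul_zero, sub_zero]

theorem four_mul_dist_le_of_dist_eq (hL : 0 < L) {α : ℝ} (hα0 : 0 ≤ α) (hα : α ≤ 1 / 4)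
    {p q : AddCircle L} (hpq : dist p q = α * L) (x y : AddCircle L) :
    4 * α * dist x y ≤ |dist x p - dist y p| + |dist x q - dist y q| := by
  obtain ⟨a, ha, hxa⟩ := exists_abs_le_half_coe_eq hL (x - p)
  obtain ⟨b, hb, hyb⟩ := exists_abs_le_half_coe_eq hL (y - p)
  obtain ⟨c, hc, hqc⟩ := exists_abs_le_half_coe_eq hL (q - p)
  have hcαL : |c| = α * L := by
    rw [← norm_coe_eq_abs_of_abs_le_half hL hc, hqc, ← dist_eq_norm, dist_comm, hpq]
  rw [dist_eq_norm x, dist_eq_norm y, dist_eq_norm x, dist_eq_norm y, dist_eq_norm x,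
    ← sub_sub_sub_cancel_right x y p, ← sub_sub_sub_cancel_right x q p,
    ← sub_sub_sub_cancel_right y q p, ← hxa, ← hyb, ← hqc, ← coe_sub, ← coe_sub, ← coe_sub]
  rcases abs_eq (mul_nonneg hα0 hL.le) |>.1 hcαL with rfl | rfl
  · exact four_mul_norm_coe_sub_le hL hα0 hα ha hb
  · have h := four_mul_norm_coe_sub_le hL hα0 hα (a := -a) (b := -b) (by rwa [abs_neg])
      (by rwa [abs_neg])
    rwa [show -a - -b = -(a - b) by ring, show -a - α * L = -(a - -(α * L)) by ring,
      show -b - α * L = -(b - -(α * L)) by ring, norm_coe_neg, norm_coe_neg, norm_coe_neg,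
      norm_coe_neg, norm_coe_neg] at h

end AddCircle

/-- Choosing uniformly at random between flattening a cycle at `p` or at `q`, where
`d_C(p,q) = L/6`, the expected flattened distance between `x` and `y` is at least
`(1/3)·d_C(x,y)`. -/
theorem expected_flattened_distance (L : ℝ) (hL : 0 < L) (p q x y : ℝ)
    (hpq : cycDist L p q = L / 6) :
    (1 / 3) * cycDist L x y ≤
      (1 / 2) * |cycDist L x p - cycDist L y p| +
        (1 / 2) * |cycDist L x q - cycDist L y q| := by
  have hpq' : dist (p : AddCircle L) q = 1 / 6 * L := by
    rw [← cycDist_eq_dist hL, hpq]; ring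
  have h := AddCircle.four_mul_dist_le_of_dist_eq hL (by norm_num) (by norm_num) hpq'
    (x : AddCircle L) y
  simp only [← cycDist_eq_dist hL] at h
  linarith
end
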